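/- (Variance bound for the isotropic ES estimator, explicit constants.) The variance Var[z_ES] := E_{g~N(0,I_d)}‖z_ES(g)‖² − ‖E_{g~N(0,I_d)}[z_ES(g)]‖² satisfies |Var[z_ES] − (d+1)·‖∇F(θ)‖²| ≤ 210·τ²·σ⁴·d⁴ + 6·τ·σ²·L·d² + 30·τ·σ²·L·d³. -/

import Mathlib

open MeasureTheory ProbabilityTheory
open scoped RealInnerProductSpace

/-- The standard Gaussian measure `N(0, I_n)` on `ℝ^n`. -/
noncomputable def stdGaussian (n : ℕ) : Measure (EuclideanSpace ℝ (Fin n)) :=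
  (Measure.pi (fun _ => gaussianReal 0 1)).map (MeasurableEquiv.toLp 2 (Fin n → ℝ))

/-!
Write `v g` for the antithetic difference quotient and `a = ∇F(θ)`. The approximation hypothesis
says `|v g - ⟪a, g⟫| ≤ ε ‖g‖³` with `ε = τσ²`, and Lipschitz continuity gives `|v g| ≤ L ‖g‖`
and `‖a‖ ≤ L`. For the linear estimator `⟪a, g⟫ g` everything is explicit:
its mean is `a` and its second moment is `(d + 2) ‖a‖²`, so its variance is `(d + 1) ‖a‖²`.
Replacing `⟪a, g⟫` by `v g` moves the mean by at most `ε E‖g‖⁴ ≤ 3εd²` and the second moment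
by at most `2εL E‖g‖⁶ ≤ 30εLd³`. The Gaussian moments needed are computed from the
one-dimensional ones, since `⟪c, g⟫ ~ N(0, ‖c‖²)`.
-/

open Real
open scoped Nat

lemma abs_norm_sq_sub_norm_sq_le {F : Type*} [SeminormedAddCommGroup F] {m a : F} {ρ L : ℝ}
    (hma : ‖m - a‖ ≤ ρ) (haL : ‖a‖ ≤ L) : |‖m‖ ^ 2 - ‖a‖ ^ 2| ≤ 2 * L * ρ + ρ ^ 2 := by
  have hdiff : |‖m‖ - ‖a‖| ≤ ρ := (abs_norm_sub_norm_le m a).trans hma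
  have hsum : ‖m‖ + ‖a‖ ≤ 2 * L + ρ := by linarith [(abs_le.mp hdiff).2]
  rw [show ‖m‖ ^ 2 - ‖a‖ ^ 2 = (‖m‖ - ‖a‖) * (‖m‖ + ‖a‖) by ring, abs_mul,
    abs_of_nonneg (by positivity : 0 ≤ ‖m‖ + ‖a‖)]
  calc |‖m‖ - ‖a‖| * (‖m‖ + ‖a‖) ≤ ρ * (2 * L + ρ) := by
        gcongr; exact (abs_nonneg _).trans hdiff
    _ = 2 * L * ρ + ρ ^ 2 := by ring

lemma LipschitzWith.abs_sub_div_two_mul_le {E : Type*} [SeminormedAddCommGroup E]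
    [NormedSpace ℝ E] {F : E → ℝ} {K : NNReal} (hF : LipschitzWith K F) {σ : ℝ} (hσ : 0 < σ)
    (θ g : E) : |(F (θ + σ • g) - F (θ - σ • g)) / (2 * σ)| ≤ K * ‖g‖ := by
  have h := hF.dist_le_mul (θ + σ • g) (θ - σ • g)
  rw [Real.dist_eq, dist_eq_norm, show θ + σ • g - (θ - σ • g) = (2 * σ) • g by module,
    norm_smul, Real.norm_of_nonneg (by positivity)] at h
  rw [abs_div, abs_of_pos (by positivity : (0 : ℝ) < 2 * σ), div_le_iff₀ (by positivity)]
  linarith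

namespace ProbabilityTheory

lemma hasDerivAt_gaussianPDFReal_zero_one (x : ℝ) :
    HasDerivAt (gaussianPDFReal 0 1) (-x * gaussianPDFReal 0 1 x) x := by
  have hpdf : gaussianPDFReal 0 1 = fun y => (√(2 * π))⁻¹ * rexp (-y ^ 2 / 2) := by
    ext y; simp [gaussianPDFReal]
  have hexponent : HasDerivAt (fun y : ℝ => -y ^ 2 / 2) (-x) x :=
    ((hasDerivAt_pow 2 x).neg.div_const 2).congr_deriv (by ring)
  rw [hpdf]
  exact (hexponent.exp.const_mul _).congr_deriv (by ring)

lemma integrable_pow_gaussianReal (n : ℕ) :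
    Integrable (fun x : ℝ => x ^ n) (gaussianReal 0 1) :=
  (memLp_id_gaussianReal n).integrable_norm_pow'.mono' (by fun_prop)
    (ae_of_all _ fun x => by simp)

lemma integrable_gaussianPDFReal_mul_pow (n : ℕ) :
    Integrable (fun x : ℝ => gaussianPDFReal 0 1 x * x ^ n) := by
  have h := integrable_pow_gaussianReal n
  rw [gaussianReal_of_var_ne_zero 0 one_ne_zero, gaussianPDF_def,
    integrable_withDensity_iff_integrable_smul' (by fun_prop)
      (ae_of_all _ fun _ => ENNReal.ofReal_lt_top)] at h
  simpa [ENNReal.toReal_ofReal (gaussianPDFReal_nonneg 0 1 _)] using h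

/-- Integration by parts against the density `p`, which satisfies `p' = -x p`. -/
lemma integral_pow_add_two_gaussianReal (n : ℕ) :
    ∫ x, x ^ (n + 2) ∂gaussianReal 0 1 = (n + 1) * ∫ x, x ^ n ∂gaussianReal 0 1 := by
  simp only [integral_gaussianReal_eq_integral_smul one_ne_zero, smul_eq_mul]
  have hparts := integral_mul_deriv_eq_deriv_mul_of_integrable
    (u := fun x : ℝ => x ^ (n + 1)) (v := gaussianPDFReal 0 1)
    (u' := fun x => (n + 1) * x ^ n) (v' := fun x => -x * gaussianPDFReal 0 1 x)
    (fun x _ => by simpa using hasDerivAt_pow (n + 1) x)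
    (fun x _ => hasDerivAt_gaussianPDFReal_zero_one x)
    ((integrable_gaussianPDFReal_mul_pow (n + 2)).neg.congr
      (ae_of_all _ fun x => by simp; ring))
    (((integrable_gaussianPDFReal_mul_pow n).const_mul (n + 1)).congr
      (ae_of_all _ fun x => by simp; ring))
    ((integrable_gaussianPDFReal_mul_pow (n + 1)).congr (ae_of_all _ fun x => by simp; ring))
  calc ∫ x, gaussianPDFReal 0 1 x * x ^ (n + 2)
      = -∫ x, x ^ (n + 1) * (-x * gaussianPDFReal 0 1 x) := by
        rw [← integral_neg]; congr 1 with x; ring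
    _ = ∫ x, (n + 1) * (gaussianPDFReal 0 1 x * x ^ n) := by
        rw [hparts, neg_neg]; congr 1 with x; ring
    _ = _ := integral_const_mul _ _

/-- At `k = 0` the truncated subtraction gives `0‼ = 1`, the usual convention `(-1)‼ = 1`. -/
lemma integral_pow_two_mul_gaussianReal (k : ℕ) :
    ∫ x, x ^ (2 * k) ∂gaussianReal 0 1 = (2 * k - 1)‼ := by
  induction k with
  | zero => simp
  | succ k ih =>
    rw [show 2 * (k + 1) = 2 * k + 2 by ring, integral_pow_add_two_gaussianReal, ih,
      show 2 * k + 2 - 1 = 2 * k + 1 by omega, Nat.doubleFactorial_add_one]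
    push_cast; ring

section StdGaussian

variable {E : Type*} [NormedAddCommGroup E] [InnerProductSpace ℝ E] [FiniteDimensional ℝ E]
  [MeasurableSpace E] [BorelSpace E]

lemma map_inner_stdGaussian (a : E) :
    (stdGaussian E).map (fun g => ⟪a, g⟫) = (gaussianReal 0 1).map (‖a‖ * ·) := by
  have h := IsGaussian.map_eq_gaussianReal (μ := stdGaussian E) (innerSL ℝ a)
  rw [integral_strongDual_stdGaussian, variance_dual_stdGaussian, innerSL_apply_norm] at h
  rw [gaussianReal_map_const_mul, mul_zero]
  convert h using 2
  · rfl
  · rw [mul_one, Real.toNNReal_of_nonneg]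

lemma integral_inner_pow_stdGaussian (a : E) (n : ℕ) :
    ∫ g, ⟪a, g⟫ ^ n ∂stdGaussian E = ‖a‖ ^ n * ∫ x, x ^ n ∂gaussianReal 0 1 := by
  rw [← integral_map (f := fun x : ℝ => x ^ n) (by fun_prop) (by fun_prop),
    map_inner_stdGaussian, integral_map (by fun_prop) (by fun_prop), ← integral_const_mul]
  simp_rw [mul_pow]

lemma integrable_norm_pow_stdGaussian (n : ℕ) :
    Integrable (fun g : E => ‖g‖ ^ n) (stdGaussian E) :=
  (IsGaussian.memLp_id (stdGaussian E) n (by simp)).integrable_norm_pow'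

lemma integrable_stdGaussian_of_norm_le {F : Type*} [NormedAddCommGroup F] {f : E → F}
    (hf : AEStronglyMeasurable f (stdGaussian E)) (C : ℝ) (n : ℕ)
    (hle : ∀ g, ‖f g‖ ≤ C * ‖g‖ ^ n) : Integrable f (stdGaussian E) :=
  ((integrable_norm_pow_stdGaussian n).const_mul C).mono' hf (ae_of_all _ hle)

lemma integrable_inner_pow_mul_inner_pow_stdGaussian (a b : E) (m n : ℕ) :
    Integrable (fun g => ⟪a, g⟫ ^ m * ⟪b, g⟫ ^ n) (stdGaussian E) := by
  refine integrable_stdGaussian_of_norm_le (by fun_prop) (‖a‖ ^ m * ‖b‖ ^ n) (m + n) fun g => ?_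
  rw [norm_mul, norm_pow, norm_pow, Real.norm_eq_abs, Real.norm_eq_abs]
  calc |⟪a, g⟫| ^ m * |⟪b, g⟫| ^ n ≤ (‖a‖ * ‖g‖) ^ m * (‖b‖ * ‖g‖) ^ n := by
        gcongr <;> exact abs_real_inner_le_norm _ _
    _ = _ := by ring

lemma integrable_inner_smul_stdGaussian (a : E) :
    Integrable (fun g => ⟪a, g⟫ • g) (stdGaussian E) := by
  refine integrable_stdGaussian_of_norm_le (by fun_prop) ‖a‖ 2 fun g => ?_
  rw [norm_smul, Real.norm_eq_abs]
  calc |⟪a, g⟫| * ‖g‖ ≤ ‖a‖ * ‖g‖ * ‖g‖ := by gcongr; exact abs_real_inner_le_norm _ _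
    _ = _ := by ring

lemma integral_inner_mul_inner_stdGaussian (a b : E) :
    ∫ g, ⟪a, g⟫ * ⟪b, g⟫ ∂stdGaussian E = ⟪a, b⟫ := by
  have h := covarianceBilin_apply (μ := stdGaussian E) IsGaussian.memLp_two_id a b
  rw [covarianceBilin_stdGaussian] at h
  simp only [id_eq, integral_id_stdGaussian, sub_zero] at h
  exact h.symm.trans (innerSL_apply_apply ℝ a b)

lemma integral_inner_smul_stdGaussian (a : E) :
    ∫ g, ⟪a, g⟫ • g ∂stdGaussian E = a := by
  refine ext_inner_left ℝ fun c => ?_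
  simp_rw [← integral_inner (integrable_inner_smul_stdGaussian a), inner_smul_right]
  rw [integral_inner_mul_inner_stdGaussian, real_inner_comm]

lemma integral_inner_sq_mul_inner_sq_stdGaussian (a b : E) :
    ∫ g, ⟪a, g⟫ ^ 2 * ⟪b, g⟫ ^ 2 ∂stdGaussian E = ‖a‖ ^ 2 * ‖b‖ ^ 2 + 2 * ⟪a, b⟫ ^ 2 := by
  have hfourth (c : E) : ∫ g, ⟪c, g⟫ ^ 4 ∂stdGaussian E = 3 * ‖c‖ ^ 4 := by
    rw [integral_inner_pow_stdGaussian, show 4 = 2 * 2 by rfl, integral_pow_two_mul_gaussianReal]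
    norm_num [Nat.doubleFactorial]; ring
  have hint (c : E) : Integrable (fun g => ⟪c, g⟫ ^ 4) (stdGaussian E) := by
    simpa using integrable_inner_pow_mul_inner_pow_stdGaussian c c 4 0
  have hpolar (g : E) : ⟪a, g⟫ ^ 2 * ⟪b, g⟫ ^ 2 =
      (⟪a + b, g⟫ ^ 4 + ⟪a - b, g⟫ ^ 4 - 2 * ⟪a, g⟫ ^ 4 - 2 * ⟪b, g⟫ ^ 4) / 12 := by
    rw [inner_add_left, inner_sub_left]; ring
  simp_rw [hpolar]
  rw [integral_div, integral_sub, integral_sub, integral_add, integral_const_mul,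
    integral_const_mul, hfourth, hfourth, hfourth, hfourth]
  · rw [show ‖a + b‖ ^ 4 = (‖a + b‖ ^ 2) ^ 2 by ring,
      show ‖a - b‖ ^ 4 = (‖a - b‖ ^ 2) ^ 2 by ring, norm_add_sq_real, norm_sub_sq_real]
    ring
  all_goals first
    | exact hint _
    | exact (hint _).const_mul 2
    | exact (hint _).add (hint _)
    | exact ((hint _).add (hint _)).sub ((hint _).const_mul 2)

lemma integral_inner_sq_mul_norm_sq_stdGaussian (a : E) :
    ∫ g, ⟪a, g⟫ ^ 2 * ‖g‖ ^ 2 ∂stdGaussian E = (Module.finrank ℝ E + 2) * ‖a‖ ^ 2 := by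
  let b := stdOrthonormalBasis ℝ E
  conv_lhs => simp only [← b.sum_sq_inner_right, Finset.mul_sum]
  rw [integral_finsetSum _ fun i _ => integrable_inner_pow_mul_inner_pow_stdGaussian _ _ 2 2]
  simp_rw [integral_inner_sq_mul_inner_sq_stdGaussian, b.norm_eq_one, Finset.sum_add_distrib,
    ← Finset.mul_sum, b.sum_sq_inner_left]
  simp; ring

lemma integral_norm_pow_le_stdGaussian (k : ℕ) :
    ∫ g, ‖g‖ ^ (2 * (k + 1)) ∂stdGaussian E ≤ Module.finrank ℝ E ^ (k + 1) * (2 * k + 1)‼ := by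
  let b := stdOrthonormalBasis ℝ E
  have hjensen (g : E) : ‖g‖ ^ (2 * (k + 1)) ≤
      Module.finrank ℝ E ^ k * ∑ i, ⟪b i, g⟫ ^ (2 * (k + 1)) := by
    simpa [pow_mul, ← b.sum_sq_inner_right] using
      pow_sum_le_card_mul_sum_pow (s := Finset.univ) (f := fun i => ⟪b i, g⟫ ^ 2)
        (fun i _ => sq_nonneg _) k
  have hint (i) : Integrable (fun g => ⟪b i, g⟫ ^ (2 * (k + 1))) (stdGaussian E) := by
    simpa using integrable_inner_pow_mul_inner_pow_stdGaussian (b i) (b i) (2 * (k + 1)) 0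
  calc ∫ g, ‖g‖ ^ (2 * (k + 1)) ∂stdGaussian E
      ≤ ∫ g, Module.finrank ℝ E ^ k * ∑ i, ⟪b i, g⟫ ^ (2 * (k + 1)) ∂stdGaussian E :=
        integral_mono (integrable_norm_pow_stdGaussian _)
          ((integrable_finsetSum _ fun i _ => hint i).const_mul _) hjensen
    _ = Module.finrank ℝ E ^ (k + 1) * (2 * k + 1)‼ := by
        rw [integral_const_mul, integral_finsetSum _ fun i _ => hint i]
        simp_rw [integral_inner_pow_stdGaussian, b.norm_eq_one, integral_pow_two_mul_gaussianReal,
          show 2 * (k + 1) - 1 = 2 * k + 1 by omega]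
        simp; ring

section Estimator

variable {v : E → ℝ} {a : E} {ε L : ℝ}

lemma norm_integral_smul_sub_le_stdGaussian (hv : AEStronglyMeasurable v (stdGaussian E))
    (hva : ∀ g, |v g - ⟪a, g⟫| ≤ ε * ‖g‖ ^ 3) :
    ‖∫ g, v g • g ∂stdGaussian E - a‖ ≤ ε * ∫ g, ‖g‖ ^ 4 ∂stdGaussian E := by
  have hbound (g : E) : ‖v g • g - ⟪a, g⟫ • g‖ ≤ ε * ‖g‖ ^ 4 := by
    rw [← sub_smul, norm_smul, Real.norm_eq_abs]
    calc |v g - ⟪a, g⟫| * ‖g‖ ≤ ε * ‖g‖ ^ 3 * ‖g‖ := by gcongr; exact hva g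
      _ = ε * ‖g‖ ^ 4 := by ring
  have hdiff : Integrable (fun g => v g • g - ⟪a, g⟫ • g) (stdGaussian E) :=
    integrable_stdGaussian_of_norm_le ((hv.smul aestronglyMeasurable_id).sub (by fun_prop))
      ε 4 hbound
  have hmean : ∫ g, v g • g ∂stdGaussian E
      = ∫ g, (v g • g - ⟪a, g⟫ • g) ∂stdGaussian E + ∫ g, ⟪a, g⟫ • g ∂stdGaussian E := by
    rw [← integral_add hdiff (integrable_inner_smul_stdGaussian a)]
    simp
  rw [hmean, integral_inner_smul_stdGaussian, add_sub_cancel_right, ← integral_const_mul]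
  exact norm_integral_le_of_norm_le ((integrable_norm_pow_stdGaussian 4).const_mul ε)
    (ae_of_all _ hbound)

lemma abs_integral_norm_smul_sq_sub_le_stdGaussian (hv : AEStronglyMeasurable v (stdGaussian E))
    (hvL : ∀ g, |v g| ≤ L * ‖g‖) (haL : ‖a‖ ≤ L) (hva : ∀ g, |v g - ⟪a, g⟫| ≤ ε * ‖g‖ ^ 3) :
    |∫ g, ‖v g • g‖ ^ 2 ∂stdGaussian E - (Module.finrank ℝ E + 2) * ‖a‖ ^ 2|
      ≤ 2 * ε * L * ∫ g, ‖g‖ ^ 6 ∂stdGaussian E := by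
  have hinnerL (g : E) : |⟪a, g⟫| ≤ L * ‖g‖ :=
    (abs_real_inner_le_norm a g).trans (by gcongr)
  have hint {w : E → ℝ} (hw : AEStronglyMeasurable w (stdGaussian E))
      (hwL : ∀ g, |w g| ≤ L * ‖g‖) :
      Integrable (fun g => w g ^ 2 * ‖g‖ ^ 2) (stdGaussian E) := by
    refine integrable_stdGaussian_of_norm_le (by fun_prop) (L ^ 2) 4 fun g => ?_
    rw [Real.norm_eq_abs, abs_of_nonneg (by positivity), ← sq_abs]
    calc |w g| ^ 2 * ‖g‖ ^ 2 ≤ (L * ‖g‖) ^ 2 * ‖g‖ ^ 2 := by gcongr; exact hwL g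
      _ = L ^ 2 * ‖g‖ ^ 4 := by ring
  have hbound (g : E) : ‖v g ^ 2 * ‖g‖ ^ 2 - ⟪a, g⟫ ^ 2 * ‖g‖ ^ 2‖ ≤ 2 * ε * L * ‖g‖ ^ 6 := by
    have hsum : |v g + ⟪a, g⟫| ≤ 2 * L * ‖g‖ := by
      linarith [abs_add_le (v g) ⟪a, g⟫, hvL g, hinnerL g]
    rw [Real.norm_eq_abs, show v g ^ 2 * ‖g‖ ^ 2 - ⟪a, g⟫ ^ 2 * ‖g‖ ^ 2
        = (v g - ⟪a, g⟫) * (v g + ⟪a, g⟫) * ‖g‖ ^ 2 by ring,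
      abs_mul, abs_mul, abs_of_nonneg (by positivity : (0 : ℝ) ≤ ‖g‖ ^ 2)]
    calc |v g - ⟪a, g⟫| * |v g + ⟪a, g⟫| * ‖g‖ ^ 2
        ≤ ε * ‖g‖ ^ 3 * (2 * L * ‖g‖) * ‖g‖ ^ 2 := by gcongr; exacts [(abs_nonneg _).trans (hva g), hva g]
      _ = 2 * ε * L * ‖g‖ ^ 6 := by ring
  simp_rw [norm_smul, mul_pow, Real.norm_eq_abs, sq_abs]
  rw [← integral_inner_sq_mul_norm_sq_stdGaussian a,
    ← integral_sub (hint hv hvL) (hint (by fun_prop) hinnerL), ← integral_const_mul]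
  exact norm_integral_le_of_norm_le ((integrable_norm_pow_stdGaussian 6).const_mul _)
    (ae_of_all _ hbound)

theorem abs_variance_sub_le_stdGaussian (hv : AEStronglyMeasurable v (stdGaussian E))
    (hvL : ∀ g, |v g| ≤ L * ‖g‖) (haL : ‖a‖ ≤ L) (hε : 0 ≤ ε)
    (hva : ∀ g, |v g - ⟪a, g⟫| ≤ ε * ‖g‖ ^ 3) :
    |(∫ g, ‖v g • g‖ ^ 2 ∂stdGaussian E - ‖∫ g, v g • g ∂stdGaussian E‖ ^ 2)
        - (Module.finrank ℝ E + 1) * ‖a‖ ^ 2|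
      ≤ 30 * ε * L * Module.finrank ℝ E ^ 3 + 6 * ε * L * Module.finrank ℝ E ^ 2
        + 9 * ε ^ 2 * Module.finrank ℝ E ^ 4 := by
  set d : ℝ := (Module.finrank ℝ E : ℝ)
  have hL : 0 ≤ L := (norm_nonneg a).trans haL
  have hfourth : ∫ g, ‖g‖ ^ 4 ∂stdGaussian E ≤ 3 * d ^ 2 := by
    simpa [Nat.doubleFactorial, mul_comm] using integral_norm_pow_le_stdGaussian (E := E) 1
  have hsixth : ∫ g, ‖g‖ ^ 6 ∂stdGaussian E ≤ 15 * d ^ 3 := by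
    simpa [Nat.doubleFactorial, mul_comm] using integral_norm_pow_le_stdGaussian (E := E) 2
  have hmean : ‖∫ g, v g • g ∂stdGaussian E - a‖ ≤ 3 * ε * d ^ 2 :=
    (norm_integral_smul_sub_le_stdGaussian hv hva).trans (by nlinarith)
  have hsecond : |∫ g, ‖v g • g‖ ^ 2 ∂stdGaussian E - (d + 2) * ‖a‖ ^ 2| ≤ 30 * ε * L * d ^ 3 :=
    (abs_integral_norm_smul_sq_sub_le_stdGaussian hv hvL haL hva).trans
      (by nlinarith [mul_nonneg hε hL])
  have hsquare := abs_norm_sq_sub_norm_sq_le hmean haL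
  calc _ = |(∫ g, ‖v g • g‖ ^ 2 ∂stdGaussian E - (d + 2) * ‖a‖ ^ 2)
          - (‖∫ g, v g • g ∂stdGaussian E‖ ^ 2 - ‖a‖ ^ 2)| := by congr 1; ring
    _ ≤ _ := (abs_sub _ _).trans (add_le_add hsecond hsquare)
    _ = _ := by ring

end Estimator

end StdGaussian

end ProbabilityTheory

theorem variance_bound_isotropic_ES_general
    (d : ℕ) (L τ σ : ℝ) (hL : 0 < L) (hτ : 0 < τ) (hσ : 0 < σ)
    (F : EuclideanSpace ℝ (Fin d) → ℝ)
    (hlip : ∀ x y : EuclideanSpace ℝ (Fin d), |F x - F y| ≤ L * ‖x - y‖)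
    (happrox : ∀ x g : EuclideanSpace ℝ (Fin d),
      |(F (x + σ • g) - F (x - σ • g)) / (2 * σ) - ⟪g, gradient F x⟫| ≤ τ * σ ^ 2 * ‖g‖ ^ 3)
    (θ : EuclideanSpace ℝ (Fin d))
    :
    |((∫ g, ‖((F (θ + σ • g) - F (θ - σ • g)) / (2 * σ)) • g‖ ^ 2 ∂(stdGaussian d)) - ‖(∫ g, ((F (θ + σ • g) - F (θ - σ • g)) / (2 * σ)) • g ∂(stdGaussian d))‖ ^ 2) - ((d : ℝ) + 1) * ‖gradient F θ‖ ^ 2|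
      ≤ 210 * τ ^ 2 * σ ^ 4 * (d : ℝ) ^ 4 + 6 * τ * σ ^ 2 * L * (d : ℝ) ^ 2
        + 30 * τ * σ ^ 2 * L * (d : ℝ) ^ 3 := by
  have hF : LipschitzWith L.toNNReal F := LipschitzWith.of_dist_le_mul fun x y => by
    rw [Real.coe_toNNReal _ hL.le, Real.dist_eq, dist_eq_norm]; exact hlip x y
  have hgrad : ‖gradient F θ‖ ≤ L := by
    rw [gradient, LinearIsometryEquiv.norm_map]
    simpa [hL.le] using norm_fderiv_le_of_lipschitz ℝ hF (x₀ := θ)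
  have hvL (g : EuclideanSpace ℝ (Fin d)) :
      |(F (θ + σ • g) - F (θ - σ • g)) / (2 * σ)| ≤ L * ‖g‖ := by
    simpa [hL.le] using hF.abs_sub_div_two_mul_le hσ θ g
  have hv : Continuous fun g : EuclideanSpace ℝ (Fin d) =>
      (F (θ + σ • g) - F (θ - σ • g)) / (2 * σ) := by
    have := hF.continuous
    fun_prop
  have key := abs_variance_sub_le_stdGaussian hv.aestronglyMeasurable hvL hgrad
    (by positivity : 0 ≤ τ * σ ^ 2) (fun g => by simpa only [real_inner_comm] using happrox θ g)
  rw [finrank_euclideanSpace_fin] at key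
  rw [show _root_.stdGaussian d = ProbabilityTheory.stdGaussian _ from map_pi_eq_stdGaussian]
  refine key.trans ?_
  nlinarith [show 0 ≤ τ ^ 2 * σ ^ 4 * (d : ℝ) ^ 4 by positivity]

/-- Variance bound for the isotropic ES estimator, explicit constants. -/
theorem variance_bound_isotropic_ES
    (d : ℕ) (hd : 1 ≤ d) (L τ σ : ℝ) (hL : 0 < L) (hτ : 0 < τ) (hσ : 0 < σ)
    (F : EuclideanSpace ℝ (Fin d) → ℝ)
    (hdiff : Differentiable ℝ F)
    (hlip : ∀ x y : EuclideanSpace ℝ (Fin d), |F x - F y| ≤ L * ‖x - y‖)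
    (happrox : ∀ x g : EuclideanSpace ℝ (Fin d),
      |(F (x + σ • g) - F (x - σ • g)) / (2 * σ) - ⟪g, gradient F x⟫| ≤ τ * σ ^ 2 * ‖g‖ ^ 3)
    (θ : EuclideanSpace ℝ (Fin d))
    :
    |((∫ g, ‖((F (θ + σ • g) - F (θ - σ • g)) / (2 * σ)) • g‖ ^ 2 ∂(stdGaussian d)) - ‖(∫ g, ((F (θ + σ • g) - F (θ - σ • g)) / (2 * σ)) • g ∂(stdGaussian d))‖ ^ 2) - ((d : ℝ) + 1) * ‖gradient F θ‖ ^ 2|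
      ≤ 210 * τ ^ 2 * σ ^ 4 * (d : ℝ) ^ 4 + 6 * τ * σ ^ 2 * L * (d : ℝ) ^ 2
        + 30 * τ * σ ^ 2 * L * (d : ℝ) ^ 3 :=
  variance_bound_isotropic_ES_general d L τ σ hL hτ hσ F hlip happrox θ
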